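/- arXiv:2506.01886 — 2 statements merged into one kernel-verified Lean document; each statement's English description precedes it below -/
import Mathlib

section
/- Jacobi triple product identity: for nonzero complex x and q with 0 < |q| < 1, (x;q)_∞ (q/x;q)_∞ (q;q)_∞ = ∑_{n∈ℤ} (-1)^n q^{n(n-1)/2} x^n. -/
open Complex

/-- Infinite q-Pochhammer symbol `(x;q)_∞ = ∏_{i≥0} (1 - q^i x)`. -/
noncomputable def qPoch (x q : ℂ) : ℂ := ∏' i : ℕ, (1 - q ^ i * x)

/-- Theta function `j(x;q) = (x;q)_∞ (q/x;q)_∞ (q;q)_∞`. -/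
noncomputable def jtheta (x q : ℂ) : ℂ := qPoch x q * qPoch (q / x) q * qPoch q q

/-!
The q-binomial theorem `∏_{j<m} (1 + t q^j) = ∑_k q^(k choose 2) [m, k]_q t^k`, taken at
`m = 2N` and `t = -x / q^N`, gives the finite identity
`∏_{i<N} (1 - q^i x)(1 - q^(i+1) / x) = ∑_{|n| ≤ N} [2N, N+n]_q (-1)^n q^(n(n-1)/2) x^n`.
As `N → ∞` the Gaussian binomial `[2N, N+n]_q = (q;q)_{2N} / ((q;q)_{N+n} (q;q)_{N-n})` tends to
`1 / (q;q)_∞` and stays uniformly bounded, so Tannery's theorem lets the limit pass through the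
sum, which is dominated by the absolutely convergent series of `|q|^(n(n-1)/2) |x|^n`.
-/

open Finset Filter Topology

section QBinomial

variable {R : Type*} [CommRing R]

def qFactorial (q : R) (m : ℕ) : R := ∏ i ∈ range m, (1 - q ^ (i + 1))

/-- The Gaussian binomial `[m, k]_q`, through the q-Pascal rule rather than as a quotient of
q-factorials (`qBinomial_eq_div`), so that no division is involved. -/
def qBinomial (q : R) : ℕ → ℕ → R
  | _, 0 => 1
  | 0, _ + 1 => 0
  | m + 1, k + 1 => qBinomial q m k + q ^ (k + 1) * qBinomial q m (k + 1)

variable (q : R)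

@[simp] lemma qBinomial_zero_right (m : ℕ) : qBinomial q m 0 = 1 := by
  cases m <;> rfl

lemma qBinomial_succ_succ (m k : ℕ) :
    qBinomial q (m + 1) (k + 1) = qBinomial q m k + q ^ (k + 1) * qBinomial q m (k + 1) := rfl

lemma qBinomial_eq_zero_of_lt {m k : ℕ} (h : m < k) : qBinomial q m k = 0 := by
  induction m generalizing k with
  | zero => obtain ⟨k, rfl⟩ := Nat.exists_eq_add_one.2 h; rfl
  | succ m ih =>
    obtain ⟨k, rfl⟩ := Nat.exists_eq_add_one.2 (Nat.zero_lt_of_lt h)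
    rw [qBinomial_succ_succ, ih (by omega), ih (by omega), mul_zero, add_zero]

@[simp] lemma qBinomial_self (m : ℕ) : qBinomial q m m = 1 := by
  induction m with
  | zero => rfl
  | succ m ih => rw [qBinomial_succ_succ, ih, qBinomial_eq_zero_of_lt q m.lt_succ_self]; ring

lemma qFactorial_succ (m : ℕ) : qFactorial q (m + 1) = qFactorial q m * (1 - q ^ (m + 1)) :=
  prod_range_succ _ _

lemma qBinomial_add_mul_qFactorial_mul_qFactorial (a b : ℕ) :
    qBinomial q (a + b) a * (qFactorial q a * qFactorial q b) = qFactorial q (a + b) := by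
  induction a generalizing b with
  | zero => simp [qFactorial]
  | succ a iha =>
    induction b with
    | zero => simp [qFactorial]
    | succ b ihb =>
      have hX := iha (b + 1)
      rw [show a + (b + 1) = a + b + 1 by ring, qFactorial_succ q b] at hX
      rw [show a + 1 + b = a + b + 1 by ring, qFactorial_succ q a] at ihb
      rw [show a + 1 + (b + 1) = a + b + 1 + 1 by ring, qBinomial_succ_succ, qFactorial_succ q a,
        qFactorial_succ q b, qFactorial_succ q (a + b + 1)]
      linear_combination (1 - q ^ (a + 1)) * hX + q ^ (a + 1) * (1 - q ^ (b + 1)) * ihb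

lemma qBinomial_mul_qFactorial_mul_qFactorial {m k : ℕ} (h : k ≤ m) :
    qBinomial q m k * (qFactorial q k * qFactorial q (m - k)) = qFactorial q m := by
  obtain ⟨b, rfl⟩ := Nat.exists_eq_add_of_le h
  rw [Nat.add_sub_cancel_left, qBinomial_add_mul_qFactorial_mul_qFactorial]

theorem prod_range_one_add_mul_pow (t : R) (m : ℕ) :
    ∏ j ∈ range m, (1 + t * q ^ j) =
      ∑ k ∈ range (m + 1), q ^ k.choose 2 * qBinomial q m k * t ^ k := by
  induction m generalizing t with
  | zero => simp
  | succ m ih =>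
    have hshift : ∀ j, 1 + t * q ^ (j + 1) = 1 + t * q * q ^ j := fun j => by ring
    have htop : ∑ k ∈ range (m + 1 + 1), q ^ k.choose 2 * qBinomial q m k * (t * q) ^ k =
        ∑ k ∈ range (m + 1), q ^ k.choose 2 * qBinomial q m k * (t * q) ^ k := by
      rw [sum_range_succ, qBinomial_eq_zero_of_lt q m.lt_succ_self]; ring
    calc ∏ j ∈ range (m + 1), (1 + t * q ^ j)
        = t * ∑ k ∈ range (m + 1), q ^ k.choose 2 * qBinomial q m k * (t * q) ^ k
          + ∑ k ∈ range (m + 1 + 1), q ^ k.choose 2 * qBinomial q m k * (t * q) ^ k := by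
          rw [prod_range_succ', htop]
          simp only [hshift, ih]
          ring
      _ = ∑ k ∈ range (m + 1), (t * (q ^ k.choose 2 * qBinomial q m k * (t * q) ^ k)
            + q ^ (k + 1).choose 2 * qBinomial q m (k + 1) * (t * q) ^ (k + 1)) + 1 := by
          rw [sum_range_succ' _ (m + 1), sum_add_distrib, mul_sum]
          simp only [Nat.choose_zero_succ, pow_zero, qBinomial_zero_right, mul_one]
          ring
      _ = _ := by
          rw [sum_range_succ' _ (m + 1)]
          refine congrArg₂ _ (sum_congr rfl fun k _ => ?_) (by simp)
          rw [qBinomial_succ_succ, Nat.choose_succ_succ', Nat.choose_one_right]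
          ring

end QBinomial

lemma sum_range_sub_eq_sum_Icc {M : Type*} [AddCommMonoid M] (f : ℤ → M) (N : ℕ) :
    ∑ k ∈ range (2 * N + 1), f (k - N) = ∑ n ∈ Icc (-N : ℤ) N, f n := by
  refine sum_nbij' (fun k => k - N) (fun n => (n + N).toNat) ?_ ?_ ?_ ?_ (fun _ _ => rfl) <;>
    intro a ha <;> simp only [mem_range, mem_Icc] at ha ⊢ <;> omega

section Field

variable {K : Type*} [Field K] {q x : K}

lemma qBinomial_eq_div {m k : ℕ} (h : k ≤ m) (hF : ∀ i, qFactorial q i ≠ 0) :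
    qBinomial q m k = qFactorial q m / (qFactorial q k * qFactorial q (m - k)) :=
  eq_div_of_mul_eq (mul_ne_zero (hF _) (hF _)) (qBinomial_mul_qFactorial_mul_qFactorial q h)

def jacobiTerm (q x : K) (n : ℤ) : K := (-1) ^ n * q ^ (n * (n - 1) / 2) * x ^ n

lemma jacobiTerm_ne_zero (hq : q ≠ 0) (hx : x ≠ 0) (n : ℤ) : jacobiTerm q x n ≠ 0 := by
  unfold jacobiTerm
  exact mul_ne_zero (mul_ne_zero (zpow_ne_zero _ (neg_ne_zero.2 one_ne_zero)) (zpow_ne_zero _ hq))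
    (zpow_ne_zero _ hx)

lemma jacobiTerm_add (hq : q ≠ 0) (hx : x ≠ 0) (m n : ℤ) :
    jacobiTerm q x (m + n) = jacobiTerm q x m * jacobiTerm q x n * q ^ (m * n) := by
  have half : ∀ k : ℤ, 2 * (k * (k - 1) / 2) = k * (k - 1) := fun k =>
    Int.two_mul_ediv_two_of_even (Int.even_mul_pred_self k)
  have hexp : (m + n) * (m + n - 1) / 2 = m * (m - 1) / 2 + n * (n - 1) / 2 + m * n := by
    linarith [half m, half n, half (m + n)]
  have hm1 : (-1 : K) ≠ 0 := neg_ne_zero.2 one_ne_zero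
  simp only [jacobiTerm, hexp, zpow_add₀ hq, zpow_add₀ hx, zpow_add₀ hm1]
  ring

lemma jacobiTerm_natCast (k : ℕ) : jacobiTerm q x k = q ^ k.choose 2 * (-x) ^ k := by
  have hexp : (k : ℤ) * (k - 1) / 2 = (k.choose 2 : ℕ) := by
    rw [Nat.choose_two_right]
    rcases k with _ | k
    · rfl
    · push_cast [Int.natCast_div]; ring_nf
  rw [jacobiTerm, hexp, zpow_natCast, zpow_natCast, zpow_natCast, neg_pow x]
  ring

lemma jacobiTerm_neg_one : jacobiTerm q x (-1) = -(q * x⁻¹) := by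
  norm_num [jacobiTerm]

lemma prod_range_one_sub_pow_div (hq : q ≠ 0) (hx : x ≠ 0) (N : ℕ) :
    ∏ i ∈ range N, (1 - q ^ i * (q / x)) =
      jacobiTerm q x (-N) * ∏ j ∈ range N, (1 - x * q ^ j / q ^ N) := by
  induction N with
  | zero => simp [jacobiTerm]
  | succ N ih =>
    have hshift : ∀ j, 1 - x * q ^ (j + 1) / q ^ (N + 1) = 1 - x * q ^ j / q ^ N := fun j => by
      field_simp; ring
    rw [prod_range_succ, ih, prod_range_succ', Nat.cast_succ, neg_add, jacobiTerm_add hq hx,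
      jacobiTerm_neg_one, neg_mul_neg, mul_one, zpow_natCast]
    simp only [hshift]
    generalize ∏ j ∈ range N, (1 - x * q ^ j / q ^ N) = U
    field_simp
    ring

theorem prod_range_mul_prod_range_eq_sum_Icc (hq : q ≠ 0) (hx : x ≠ 0) (N : ℕ) :
    (∏ i ∈ range N, (1 - q ^ i * x)) * ∏ i ∈ range N, (1 - q ^ i * (q / x)) =
      ∑ n ∈ Icc (-N : ℤ) N, qBinomial q (2 * N) (n + N).toNat * jacobiTerm q x n := by
  set t := -x / q ^ N
  have hprod : ∏ j ∈ range (2 * N), (1 + t * q ^ j) =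
      (∏ j ∈ range N, (1 - x * q ^ j / q ^ N)) * ∏ i ∈ range N, (1 - q ^ i * x) := by
    rw [two_mul, prod_range_add]
    congr 1 <;> refine prod_congr rfl fun j _ => ?_
    · simp only [t]; ring
    · simp only [t, pow_add]; field_simp; ring
  have hterm (k : ℕ) :
      jacobiTerm q x (-N) * (q ^ k.choose 2 * t ^ k) = jacobiTerm q x (k - N) := by
    rw [sub_eq_add_neg, jacobiTerm_add hq hx, jacobiTerm_natCast, mul_neg, zpow_neg,
      ← Nat.cast_mul, zpow_natCast, div_pow, ← pow_mul]
    field_simp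
    ring
  calc (∏ i ∈ range N, (1 - q ^ i * x)) * ∏ i ∈ range N, (1 - q ^ i * (q / x))
      = jacobiTerm q x (-N) * ∏ j ∈ range (2 * N), (1 + t * q ^ j) := by
        rw [prod_range_one_sub_pow_div hq hx, hprod]; ring
    _ = ∑ k ∈ range (2 * N + 1), qBinomial q (2 * N) k * jacobiTerm q x (k - N) := by
        rw [prod_range_one_add_mul_pow, mul_sum]
        refine sum_congr rfl fun k _ => ?_
        rw [← hterm]; ring
    _ = _ := by
        rw [← sum_range_sub_eq_sum_Icc]
        simp only [sub_add_cancel, Int.toNat_natCast]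

end Field

section Complex

variable {q x : ℂ}

lemma one_sub_ne_zero_of_norm_lt_one {R : Type*} [SeminormedRing R] [NormOneClass R] {y : R}
    (hy : ‖y‖ < 1) : 1 - y ≠ 0 :=
  sub_ne_zero.2 (ne_of_apply_ne norm (by simpa using hy.ne)).symm

lemma tendsto_prod_range_qPoch (x : ℂ) (hq : ‖q‖ < 1) :
    Tendsto (fun N => ∏ i ∈ range N, (1 - q ^ i * x)) atTop (𝓝 (qPoch x q)) := by
  have hsum : Summable fun i : ℕ => -(q ^ i * x) :=
    ((summable_geometric_of_norm_lt_one hq).mul_right x).neg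
  simpa only [qPoch, sub_eq_add_neg] using
    (Complex.multipliable_one_add_of_summable hsum).tendsto_prod_tprod_nat

lemma qPoch_ne_zero (hq : ‖q‖ < 1) (hx : ‖x‖ < 1) : qPoch x q ≠ 0 := by
  simp only [qPoch, sub_eq_add_neg]
  refine tprod_one_add_ne_zero_of_summable (fun i => ?_) ?_
  · rw [← sub_eq_add_neg]
    refine one_sub_ne_zero_of_norm_lt_one ?_
    rw [norm_mul, norm_pow]
    exact (mul_le_of_le_one_left (norm_nonneg _) (pow_le_one₀ (norm_nonneg _) hq.le)).trans_lt hx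
  · simpa using ((summable_geometric_of_norm_lt_one hq).mul_right x).norm

lemma tendsto_qFactorial (hq : ‖q‖ < 1) : Tendsto (qFactorial q) atTop (𝓝 (qPoch q q)) := by
  have hF : qFactorial q = fun N => ∏ i ∈ range N, (1 - q ^ i * q) :=
    funext fun N => by simp only [qFactorial, pow_succ]
  exact hF ▸ tendsto_prod_range_qPoch q hq

lemma qFactorial_ne_zero (hq : ‖q‖ < 1) (m : ℕ) : qFactorial q m ≠ 0 :=
  prod_ne_zero_iff.2 fun i _ => one_sub_ne_zero_of_norm_lt_one <| by
    rw [norm_pow]; exact pow_lt_one₀ (norm_nonneg _) hq i.succ_ne_zero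

lemma tendsto_qBinomial_two_mul (hq : ‖q‖ < 1) (n : ℤ) :
    Tendsto (fun N : ℕ => qBinomial q (2 * N) (n + N).toNat) atTop (𝓝 (qPoch q q)⁻¹) := by
  have hP := qPoch_ne_zero hq hq
  have hlim {u : ℕ → ℕ} (hu : ∀ N, N - n.natAbs ≤ u N) :
      Tendsto (fun N => qFactorial q (u N)) atTop (𝓝 (qPoch q q)) :=
    (tendsto_qFactorial hq).comp (tendsto_atTop_mono hu (tendsto_sub_atTop_nat _))
  have hquot := (hlim (u := (2 * ·)) (by omega)).div
    ((hlim (u := fun N => (n + N).toNat) (by omega)).mul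
      (hlim (u := fun N => 2 * N - (n + N).toNat) (by omega))) (mul_ne_zero hP hP)
  rw [div_mul_cancel_left₀ hP] at hquot
  refine hquot.congr' ?_
  filter_upwards [eventually_ge_atTop n.natAbs] with N hN
  exact (qBinomial_eq_div (by omega) (qFactorial_ne_zero hq)).symm

lemma exists_norm_qBinomial_le (hq : ‖q‖ < 1) : ∃ B, ∀ m k, ‖qBinomial q m k‖ ≤ B := by
  have hF := tendsto_qFactorial hq
  obtain ⟨C, hC⟩ := isBounded_iff_forall_norm_le.1 (Metric.isBounded_range_of_tendsto _ hF)
  obtain ⟨D, hD⟩ := isBounded_iff_forall_norm_le.1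
    (Metric.isBounded_range_of_tendsto _ (hF.inv₀ (qPoch_ne_zero hq hq)))
  have hC0 : 0 ≤ C := (norm_nonneg _).trans (hC _ (Set.mem_range_self 0))
  have hD0 : 0 ≤ D := (norm_nonneg _).trans (hD _ (Set.mem_range_self 0))
  refine ⟨C * D * D, fun m k => ?_⟩
  rcases le_or_gt k m with h | h
  · rw [qBinomial_eq_div h (qFactorial_ne_zero hq), div_eq_mul_inv, mul_inv, ← mul_assoc,
      norm_mul, norm_mul]
    gcongr
    exacts [hC _ (Set.mem_range_self _), hD _ (Set.mem_range_self _),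
      hD _ (Set.mem_range_self _)]
  · rw [qBinomial_eq_zero_of_lt q h, norm_zero]
    positivity

/-- With `e = ±1` this covers both tails of the series over `ℤ`. -/
lemma summable_norm_jacobiTerm_mul_natCast (hq0 : q ≠ 0) (hq : ‖q‖ < 1) (hx : x ≠ 0) {e : ℤ}
    (he : e * e = 1) : Summable fun n : ℕ => ‖jacobiTerm q x (e * n)‖ := by
  have hratio (n : ℕ) :
      ‖‖jacobiTerm q x (e * (n + 1 : ℕ))‖‖ / ‖‖jacobiTerm q x (e * n)‖‖ =
        ‖jacobiTerm q x e‖ * ‖q‖ ^ n := by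
    rw [norm_norm, norm_norm, Nat.cast_succ, mul_add_one, jacobiTerm_add hq0 hx,
      show e * n * e = n by linear_combination (n : ℤ) * he, zpow_natCast, norm_mul, norm_mul,
      norm_pow]
    field_simp [norm_ne_zero_iff.2 (jacobiTerm_ne_zero hq0 hx _)]
  refine summable_of_ratio_test_tendsto_lt_one zero_lt_one
    (Eventually.of_forall fun n => norm_ne_zero_iff.2 (jacobiTerm_ne_zero hq0 hx _)) ?_
  simp only [hratio]
  simpa using (tendsto_pow_atTop_nhds_zero_of_lt_one (norm_nonneg q) hq).const_mul
    ‖jacobiTerm q x e‖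

lemma summable_norm_jacobiTerm (hq0 : q ≠ 0) (hq : ‖q‖ < 1) (hx : x ≠ 0) :
    Summable fun n : ℤ => ‖jacobiTerm q x n‖ :=
  .of_nat_of_neg (by simpa using summable_norm_jacobiTerm_mul_natCast hq0 hq hx (e := 1) rfl)
    (by simpa using summable_norm_jacobiTerm_mul_natCast hq0 hq hx (e := -1) rfl)

theorem tendsto_sum_Icc_qBinomial_mul_jacobiTerm (hq0 : q ≠ 0) (hq : ‖q‖ < 1) (hx : x ≠ 0) :
    Tendsto
      (fun N : ℕ => ∑ n ∈ Icc (-N : ℤ) N, qBinomial q (2 * N) (n + N).toNat * jacobiTerm q x n)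
      atTop (𝓝 ((qPoch q q)⁻¹ * ∑' n : ℤ, jacobiTerm q x n)) := by
  obtain ⟨B, hB⟩ := exists_norm_qBinomial_le hq
  refine Tendsto.congr (fun N => (sum_eq_tsum_indicator _ _).symm) ?_
  rw [← tsum_mul_left]
  refine tendsto_tsum_of_dominated_convergence ((summable_norm_jacobiTerm hq0 hq hx).mul_left B)
    (fun n => ?_) (Eventually.of_forall fun N n => ?_)
  · refine ((tendsto_qBinomial_two_mul hq n).mul_const _).congr' ?_
    filter_upwards [eventually_ge_atTop n.natAbs] with N hN
    rw [Set.indicator_of_mem (by simp only [coe_Icc, Set.mem_Icc]; omega)]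
  · refine (norm_indicator_le_norm_self _ _).trans ?_
    rw [norm_mul]
    exact mul_le_mul_of_nonneg_right (hB _ _) (norm_nonneg _)

end Complex

theorem jacobi_triple_product (q x : ℂ) (hq0 : 0 < ‖q‖)
    (hq : ‖q‖ < 1) (hx : x ≠ 0) :
    qPoch x q * qPoch (q / x) q * qPoch q q
      = ∑' n : ℤ, (-1 : ℂ) ^ n * q ^ (n * (n - 1) / 2) * x ^ n := by
  have hq0' : q ≠ 0 := norm_pos_iff.mp hq0
  have hlim : qPoch x q * qPoch (q / x) q = (qPoch q q)⁻¹ * ∑' n : ℤ, jacobiTerm q x n := by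
    refine tendsto_nhds_unique
      ((tendsto_prod_range_qPoch x hq).mul (tendsto_prod_range_qPoch (q / x) hq)) ?_
    simpa only [prod_range_mul_prod_range_eq_sum_Icc hq0' hx] using
      tendsto_sum_Icc_qBinomial_mul_jacobiTerm hq0' hq hx
  rw [hlim, mul_comm, ← mul_assoc, mul_inv_cancel₀ (qPoch_ne_zero hq hq), one_mul]
  rfl
end

section
/- For generic nonzero x, z, q with |q|<1 (such that no denominator vanishes), the Appell function satisfies m(x,z;q) = m(x,qz;q), where m(x,z;q) := (1/j(z;q)) ∑_{r∈ℤ} (-1)^r q^{r(r-1)/2} z^r / (1 - q^{r-1} x z). -/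
open Complex

/-- Appell function `m(x,z;q) = j(z;q)⁻¹ ∑_{r∈ℤ} (-1)^r q^{r(r-1)/2} z^r / (1-q^{r-1}xz)`. -/
noncomputable def appell (x z q : ℂ) : ℂ :=
  (jtheta z q)⁻¹
    * ∑' r : ℤ, (-1 : ℂ) ^ r * q ^ (r * (r - 1) / 2) * z ^ r / (1 - q ^ (r - 1) * x * z)

/-!
Both ingredients of `m(x,z;q)` pick up the same factor `-z⁻¹` under `z ↦ qz`. For the theta
function this is `(z;q)_∞ = (1 - z) (qz;q)_∞`, applied to `z` and to `z⁻¹`. For the series, the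
`r`-th term at `qz` is `-z⁻¹` times the `(r + 1)`-st term at `z`, since `q^{r(r-1)/2} q^r =
q^{(r+1)r/2}` and `q^{r-1} x (qz) = q^r x z`; reindexing the sum over `ℤ` needs no convergence.
-/

lemma multipliable_one_sub_pow_mul {q : ℂ} (hq : ‖q‖ < 1) (y : ℂ) :
    Multipliable fun n : ℕ => 1 - q ^ n * y := by
  simp_rw [sub_eq_add_neg]
  apply multipliable_one_add_of_summable
  simpa [norm_mul, norm_pow] using
    (summable_geometric_of_lt_one (norm_nonneg q) hq).mul_right ‖y‖

lemma qPoch_eq_one_sub_mul_qPoch_mul {q : ℂ} (hq : ‖q‖ < 1) (y : ℂ) :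
    qPoch y q = (1 - y) * qPoch (q * y) q := by
  have hshift : (fun n : ℕ => 1 - q ^ (n + 1) * y) = fun n => 1 - q ^ n * (q * y) := by
    funext n
    ring
  unfold qPoch
  rw [tprod_eq_zero_mul' (hshift ▸ multipliable_one_sub_pow_mul hq (q * y)), hshift,
    pow_zero, one_mul]

lemma jtheta_mul_left {q z : ℂ} (hq : ‖q‖ < 1) (hq0 : q ≠ 0) (hz : z ≠ 0) :
    jtheta (q * z) q = -z⁻¹ * jtheta z q := by
  have hinv : q / (q * z) = z⁻¹ := by field_simp
  have hz_inv : qPoch z⁻¹ q = (1 - z⁻¹) * qPoch (q / z) q := by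
    rw [qPoch_eq_one_sub_mul_qPoch_mul hq, div_eq_mul_inv]
  rw [jtheta, jtheta, hinv, hz_inv, qPoch_eq_one_sub_mul_qPoch_mul hq z]
  field_simp
  ring

noncomputable def appellTerm (x z q : ℂ) (r : ℤ) : ℂ :=
  (-1 : ℂ) ^ r * q ^ (r * (r - 1) / 2) * z ^ r / (1 - q ^ (r - 1) * x * z)

lemma appell_eq_inv_jtheta_mul_tsum (x z q : ℂ) :
    appell x z q = (jtheta z q)⁻¹ * ∑' r : ℤ, appellTerm x z q r :=
  rfl

lemma triangular_succ (r : ℤ) : (r + 1) * r / 2 = r * (r - 1) / 2 + r := by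
  rw [show (r + 1) * r = r * (r - 1) + r * 2 by ring, Int.add_mul_ediv_right _ _ two_ne_zero]

lemma appellTerm_mul_left (x : ℂ) {q z : ℂ} (hq0 : q ≠ 0) (hz : z ≠ 0) (r : ℤ) :
    appellTerm x (q * z) q r = -z⁻¹ * appellTerm x z q (r + 1) := by
  have hden : q ^ (r - 1) * x * (q * z) = q ^ (r + 1 - 1) * x * z := by
    rw [add_sub_cancel_right, zpow_sub_one₀ hq0]
    field_simp
  rw [appellTerm, appellTerm, hden, add_sub_cancel_right, triangular_succ, zpow_add₀ hq0,
    zpow_add_one₀ (neg_ne_zero.mpr one_ne_zero), zpow_add_one₀ hz, mul_zpow]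
  field_simp

lemma tsum_appellTerm_mul_left (x : ℂ) {q z : ℂ} (hq0 : q ≠ 0) (hz : z ≠ 0) :
    ∑' r : ℤ, appellTerm x (q * z) q r = -z⁻¹ * ∑' r : ℤ, appellTerm x z q r := by
  simp_rw [appellTerm_mul_left x hq0 hz]
  rw [tsum_mul_left]
  exact congrArg _ ((Equiv.addRight 1).tsum_eq (appellTerm x z q))

theorem appell_z_shift_general (q x z : ℂ) (hq : ‖q‖ < 1)
    (hq0 : q ≠ 0) (hz : z ≠ 0) :
    appell x z q = appell x (q * z) q := by
  rw [appell_eq_inv_jtheta_mul_tsum, appell_eq_inv_jtheta_mul_tsum,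
    tsum_appellTerm_mul_left x hq0 hz, jtheta_mul_left hq hq0 hz, mul_inv,
    mul_mul_mul_comm, inv_mul_cancel₀ (neg_ne_zero.mpr (inv_ne_zero hz)), one_mul]

theorem appell_z_shift (q x z : ℂ) (hq : ‖q‖ < 1)
    (hq0 : q ≠ 0) (hx : x ≠ 0) (hz : z ≠ 0)
    (hden : ∀ r : ℤ, 1 - q ^ (r - 1) * x * z ≠ 0)
    (hden' : ∀ r : ℤ, 1 - q ^ (r - 1) * x * (q * z) ≠ 0)
    (hj : jtheta z q ≠ 0) (hj' : jtheta (q * z) q ≠ 0) :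
    appell x z q = appell x (q * z) q :=
  appell_z_shift_general q x z hq hq0 hz
end
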